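/- arXiv:2205.15639 — 3 statements merged into one kernel-verified Lean document; each statement's English description precedes it below -/
import Mathlib

section
/- (Boundedness of the error signals.) Let b > 0, φ > 0, κ > 0 be constants, N a positive natural number, D* ∈ ℝ^N, e : ℝ → ℝ differentiable, D̂ : ℝ → ℝ^N differentiable, and ψ : ℝ → ℝ^N with e'(t) = b ⟨D̂(t) − D*, ψ(t)⟩ − κ e(t) and D̂'(t) = −φ e(t) ψ(t) for all t ≥ 0. Let V(0) = e(0)²/2 + (b/(2φ)) ‖D̂(0) − D*‖². Then for all t ≥ 0: |e(t)| ≤ √(2 V(0)) and ‖D̂(t) − D*‖ ≤ √(2 φ V(0)/b). -/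
/-!
`V = e²/2 + (b/(2φ))‖D̂ - D*‖²` is a Lyapunov function: along the closed loop the cross terms
`± b e ⟨D̂ - D*, ψ⟩` coming from the two equations cancel, leaving `V' = -κ e² ≤ 0`. Hence
`V(t) ≤ V(0)` for `t ≥ 0`, and each of the two nonnegative summands of `V(t)` is at most `V(0)`.
-/

open Set
open scoped RealInnerProductSpace

section

variable {E : Type*} [NormedAddCommGroup E] [InnerProductSpace ℝ E]

theorem hasDerivAt_sq_half_add_mul_norm_sq {e : ℝ → ℝ} {x : ℝ → E} {e' c t : ℝ} {x' : E}
    (he : HasDerivAt e e' t) (hx : HasDerivAt x x' t) :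
    HasDerivAt (fun s => e s ^ 2 / 2 + c * ‖x s‖ ^ 2) (e t * e' + c * (2 * ⟪x t, x'⟫)) t :=
  (((he.pow 2).div_const 2).add (hx.norm_sq.const_mul c)).congr_deriv (by ring)

theorem antitoneOn_lyapunov_of_adaptive_law {b φ κ t₀ : ℝ} (hφ : φ ≠ 0) (hκ : 0 ≤ κ)
    {e : ℝ → ℝ} {x ψ : ℝ → E}
    (he : ∀ t, t₀ ≤ t → HasDerivAt e (b * ⟪x t, ψ t⟫ - κ * e t) t)
    (hx : ∀ t, t₀ ≤ t → HasDerivAt x (-(φ * e t) • ψ t) t) :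
    AntitoneOn (fun t => e t ^ 2 / 2 + b / (2 * φ) * ‖x t‖ ^ 2) (Ici t₀) := by
  have hV : ∀ t, t₀ ≤ t →
      HasDerivAt (fun s => e s ^ 2 / 2 + b / (2 * φ) * ‖x s‖ ^ 2) (-κ * e t ^ 2) t := by
    intro t ht
    convert hasDerivAt_sq_half_add_mul_norm_sq (c := b / (2 * φ)) (he t ht) (hx t ht) using 1
    rw [real_inner_smul_right]
    field_simp
    ring
  refine antitoneOn_of_hasDerivWithinAt_nonpos (f' := fun t => -κ * e t ^ 2) (convex_Ici t₀)
    (fun t ht => (hV t ht).continuousAt.continuousWithinAt) (fun t ht => ?_) (fun t _ => ?_)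
  · rw [interior_Ici] at ht
    exact (hV t ht.le).hasDerivWithinAt
  · nlinarith [sq_nonneg (e t)]

end

theorem error_signals_bounded_general
    (b φ κ : ℝ) (hb : 0 < b) (hφ : 0 < φ) (hκ : 0 < κ)
    (N : ℕ)
    (Dstar : EuclideanSpace ℝ (Fin N))
    (e : ℝ → ℝ) (he : Differentiable ℝ e)
    (Dhat : ℝ → EuclideanSpace ℝ (Fin N)) (hDhat : Differentiable ℝ Dhat)
    (ψ : ℝ → EuclideanSpace ℝ (Fin N))
    (herr : ∀ t : ℝ, 0 ≤ t → deriv e t = b * ⟪Dhat t - Dstar, ψ t⟫ - κ * e t)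
    (hadapt : ∀ t : ℝ, 0 ≤ t → deriv Dhat t = -(φ * e t) • ψ t)
    (V₀ : ℝ)
    (hV₀ : V₀ = e 0 ^ 2 / 2 + (b / (2 * φ)) * ‖Dhat 0 - Dstar‖ ^ 2) :
    ∀ t : ℝ, 0 ≤ t →
      |e t| ≤ Real.sqrt (2 * V₀) ∧ ‖Dhat t - Dstar‖ ≤ Real.sqrt (2 * φ * V₀ / b) := by
  have hV := antitoneOn_lyapunov_of_adaptive_law (t₀ := 0) (x := fun t => Dhat t - Dstar)
    hφ.ne' hκ.le (fun t ht => herr t ht ▸ (he t).hasDerivAt)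
    (fun t ht => (hadapt t ht ▸ (hDhat t).hasDerivAt).sub_const Dstar)
  intro t ht
  have hVt : e t ^ 2 / 2 + b / (2 * φ) * ‖Dhat t - Dstar‖ ^ 2 ≤ V₀ :=
    hV₀ ▸ hV self_mem_Ici ht ht
  have hcoef : b / (2 * φ) * (2 * φ) = b := by field_simp
  constructor
  · exact Real.abs_le_sqrt (by nlinarith [sq_nonneg ‖Dhat t - Dstar‖])
  · rw [← abs_norm]
    refine Real.abs_le_sqrt ?_
    rw [le_div_iff₀ hb]
    nlinarith [sq_nonneg (e t), sq_nonneg ‖Dhat t - Dstar‖]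

/-- Boundedness of the error signals: along the closed-loop error dynamics and the
adaptation law, `|e(t)| ≤ √(2 V(0))` and `‖D̂(t) - D*‖ ≤ √(2 φ V(0)/b)` for all `t ≥ 0`,
where `V(0) = e(0)²/2 + (b/(2φ)) ‖D̂(0) - D*‖²`. -/
theorem error_signals_bounded
    (b φ κ : ℝ) (hb : 0 < b) (hφ : 0 < φ) (hκ : 0 < κ)
    (N : ℕ) (hN : 0 < N)
    (Dstar : EuclideanSpace ℝ (Fin N))
    (e : ℝ → ℝ) (he : Differentiable ℝ e)
    (Dhat : ℝ → EuclideanSpace ℝ (Fin N)) (hDhat : Differentiable ℝ Dhat)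
    (ψ : ℝ → EuclideanSpace ℝ (Fin N))
    (herr : ∀ t : ℝ, 0 ≤ t → deriv e t = b * ⟪Dhat t - Dstar, ψ t⟫ - κ * e t)
    (hadapt : ∀ t : ℝ, 0 ≤ t → deriv Dhat t = -(φ * e t) • ψ t)
    (V₀ : ℝ)
    (hV₀ : V₀ = e 0 ^ 2 / 2 + (b / (2 * φ)) * ‖Dhat 0 - Dstar‖ ^ 2) :
    ∀ t : ℝ, 0 ≤ t →
      |e t| ≤ Real.sqrt (2 * V₀) ∧ ‖Dhat t - Dstar‖ ≤ Real.sqrt (2 * φ * V₀ / b) :=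
  error_signals_bounded_general b φ κ hb hφ hκ N Dstar e he Dhat hDhat ψ herr hadapt V₀ hV₀
end

section
/- (Square-integrability of the combined error.) Let b > 0, φ > 0, κ > 0 be constants, N a positive natural number, D* ∈ ℝ^N, e : ℝ → ℝ differentiable, D̂ : ℝ → ℝ^N differentiable, and ψ : ℝ → ℝ^N with e'(t) = b ⟨D̂(t) − D*, ψ(t)⟩ − κ e(t) and D̂'(t) = −φ e(t) ψ(t) for all t ≥ 0. Then for every T ≥ 0, ∫₀^T e(t)² dt ≤ V(0)/κ, where V(0) = e(0)²/2 + (b/(2φ)) ‖D̂(0) − D*‖²; in particular e ∈ L²([0,∞)). -/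
open scoped RealInnerProductSpace
open MeasureTheory Set Filter

/-! The Lyapunov function `V = e²/2 + (b/(2φ))‖D̂ − D*‖²` is nonnegative, and along the
dynamics `V' = −κ e²`: the adaptation law is chosen precisely so that the cross term
`b e ⟨D̂ − D*, ψ⟩` coming from `e e'` cancels. Integrating, `κ ∫₀ᵀ e² = V(0) − V(T) ≤ V(0)`,
and a nonnegative function with uniformly bounded integrals over `[0, T]` is integrable
on `[0, ∞)`. -/

section Lyapunov

variable {E : Type*} [NormedAddCommGroup E] {b φ κ : ℝ} {Dstar ψ : E} {e : ℝ → ℝ}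
  {Dhat : ℝ → E} {t : ℝ}

noncomputable def adaptiveLyapunov (b φ : ℝ) (Dstar : E) (e : ℝ → ℝ) (Dhat : ℝ → E)
    (t : ℝ) : ℝ :=
  e t ^ 2 / 2 + b / (2 * φ) * ‖Dhat t - Dstar‖ ^ 2

lemma adaptiveLyapunov_nonneg (hb : 0 ≤ b) (hφ : 0 ≤ φ) :
    0 ≤ adaptiveLyapunov b φ Dstar e Dhat t := by
  unfold adaptiveLyapunov
  positivity

variable [InnerProductSpace ℝ E]

lemma hasDerivAt_adaptiveLyapunov (hφ : φ ≠ 0)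
    (he : HasDerivAt e (b * ⟪Dhat t - Dstar, ψ⟫ - κ * e t) t)
    (hDhat : HasDerivAt Dhat (-(φ * e t) • ψ) t) :
    HasDerivAt (adaptiveLyapunov b φ Dstar e Dhat) (-(κ * e t ^ 2)) t := by
  have hsq := (he.fun_pow 2).div_const 2
  have hnorm := (hDhat.sub_const Dstar).norm_sq.const_mul (b / (2 * φ))
  refine (hsq.add hnorm).congr_deriv ?_
  rw [real_inner_smul_right]
  field_simp
  ring

end Lyapunov

lemma intervalIntegral_le_of_hasDerivAt_neg {V W : ℝ → ℝ} {a b : ℝ}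
    (hV : ∀ t ∈ uIcc a b, HasDerivAt V (-W t) t) (hW : IntervalIntegrable W volume a b)
    (hVb : 0 ≤ V b) : ∫ t in a..b, W t ≤ V a := by
  have hftc := intervalIntegral.integral_eq_sub_of_hasDerivAt hV hW.neg
  rw [intervalIntegral.integral_neg] at hftc
  linarith

lemma integrableOn_Ici_of_intervalIntegral_le {f : ℝ → ℝ} {a C : ℝ}
    (hfi : ∀ T, IntegrableOn f (Ioc a T)) (hf : ∀ t, 0 ≤ f t)
    (hC : ∀ T, a ≤ T → ∫ t in a..T, f t ≤ C) : IntegrableOn f (Ici a) := by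
  rw [integrableOn_Ici_iff_integrableOn_Ioi]
  refine integrableOn_Ioi_of_intervalIntegral_norm_bounded C a hfi tendsto_id ?_
  filter_upwards [eventually_ge_atTop a] with T hT
  simpa only [Real.norm_of_nonneg (hf _)] using hC T hT

theorem combined_error_square_integrable_general
    (b φ κ : ℝ) (hb : 0 < b) (hφ : 0 < φ) (hκ : 0 < κ)
    (N : ℕ)
    (Dstar : EuclideanSpace ℝ (Fin N))
    (e : ℝ → ℝ) (he : Differentiable ℝ e)
    (Dhat : ℝ → EuclideanSpace ℝ (Fin N)) (hDhat : Differentiable ℝ Dhat)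
    (ψ : ℝ → EuclideanSpace ℝ (Fin N))
    (herr : ∀ t : ℝ, 0 ≤ t → deriv e t = b * ⟪Dhat t - Dstar, ψ t⟫ - κ * e t)
    (hadapt : ∀ t : ℝ, 0 ≤ t → deriv Dhat t = -(φ * e t) • ψ t)
    (V₀ : ℝ)
    (hV₀ : V₀ = e 0 ^ 2 / 2 + (b / (2 * φ)) * ‖Dhat 0 - Dstar‖ ^ 2) :
    (∀ T : ℝ, 0 ≤ T → ∫ t in (0 : ℝ)..T, e t ^ 2 ≤ V₀ / κ) ∧
      MeasureTheory.IntegrableOn (fun t => e t ^ 2) (Set.Ici (0 : ℝ)) := by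
  have hcont : Continuous fun t => e t ^ 2 := he.continuous.pow 2
  have hV : ∀ t, 0 ≤ t →
      HasDerivAt (adaptiveLyapunov b φ Dstar e Dhat) (-(κ * e t ^ 2)) t := fun t ht =>
    hasDerivAt_adaptiveLyapunov hφ.ne' (herr t ht ▸ (he t).hasDerivAt)
      (hadapt t ht ▸ (hDhat t).hasDerivAt)
  have hbound : ∀ T : ℝ, 0 ≤ T → ∫ t in (0 : ℝ)..T, e t ^ 2 ≤ V₀ / κ := by
    intro T hT
    rw [le_div_iff₀' hκ, ← intervalIntegral.integral_const_mul, hV₀]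
    refine intervalIntegral_le_of_hasDerivAt_neg (fun t ht => hV t ?_)
      ((continuous_const.mul hcont).intervalIntegrable 0 T)
      (adaptiveLyapunov_nonneg hb.le hφ.le)
    exact (uIcc_of_le hT ▸ ht).1
  exact ⟨hbound, integrableOn_Ici_of_intervalIntegral_le (fun _ => hcont.integrableOn_Ioc)
    (fun t => sq_nonneg (e t)) hbound⟩

/-- Square-integrability of the combined error: along the closed-loop error dynamics and
the adaptation law, `∫₀ᵀ e² ≤ V(0)/κ` for every `T ≥ 0`, and `e² is integrable on
`[0, ∞)` (i.e. `e ∈ L²([0,∞))`). -/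
theorem combined_error_square_integrable
    (b φ κ : ℝ) (hb : 0 < b) (hφ : 0 < φ) (hκ : 0 < κ)
    (N : ℕ) (hN : 0 < N)
    (Dstar : EuclideanSpace ℝ (Fin N))
    (e : ℝ → ℝ) (he : Differentiable ℝ e)
    (Dhat : ℝ → EuclideanSpace ℝ (Fin N)) (hDhat : Differentiable ℝ Dhat)
    (ψ : ℝ → EuclideanSpace ℝ (Fin N))
    (herr : ∀ t : ℝ, 0 ≤ t → deriv e t = b * ⟪Dhat t - Dstar, ψ t⟫ - κ * e t)
    (hadapt : ∀ t : ℝ, 0 ≤ t → deriv Dhat t = -(φ * e t) • ψ t)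
    (V₀ : ℝ)
    (hV₀ : V₀ = e 0 ^ 2 / 2 + (b / (2 * φ)) * ‖Dhat 0 - Dstar‖ ^ 2) :
    (∀ T : ℝ, 0 ≤ T → ∫ t in (0 : ℝ)..T, e t ^ 2 ≤ V₀ / κ) ∧
      MeasureTheory.IntegrableOn (fun t => e t ^ 2) (Set.Ici (0 : ℝ)) :=
  combined_error_square_integrable_general b φ κ hb hφ hκ N Dstar e he Dhat hDhat ψ herr hadapt V₀
    hV₀
end

section
/- (Main theorem: global stability and trajectory tracking of the adaptive fuzzy controller.) Let a₀, a₁, a₂ ∈ ℝ, b > 0, c₀ > 0, c₁ > 0, κ > 0, φ > 0 be constants, N a positive natural number, D* ∈ ℝ^N, and Ψ : ℝ → ℝ^N a function with ‖Ψ(z)‖ ≤ 1 for all z. Let x_d : ℝ → ℝ be three times differentiable with x_d, x_d', x_d'', x_d''' bounded on [0,∞). Let x : [0,∞) → ℝ be three times differentiable, D̂ : [0,∞) → ℝ^N differentiable, and d : [0,∞) → ℝ. Set x̃ = x − x_d, e = c₀ x̃ + c₁ x̃' + x̃'', û(t) = b⁻¹(a₀ x(t) + a₁ x'(t) + a₂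 x''(t) + x_d'''(t) − c₁ x̃''(t) − c₀ x̃'(t)), and u(t) = û(t) + ⟨D̂(t), Ψ(û(t))⟩ − κ e(t). Suppose for all t ≥ 0: x'''(t) = −a₀ x(t) − a₁ x'(t) − a₂ x''(t) + b u(t) − b d(t), D̂'(t) = −φ e(t) Ψ(û(t)), and ⟨D*, Ψ(û(t))⟩ = d(t). Then: (i) e and D̂ − D* are bounded on [0,∞); (ii) e(t) → 0 as t → ∞; (iii) x̃(t) → 0 and x̃'(t) → 0 as t → ∞. -/
/-!
With `D = D̂ - D*`, the closed loop reduces to `e' = b⟪D, Ψ(û)⟫ - bκe` and `D' = -φeΨ(û)`, so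
`V = e²/2 + b/(2φ)‖D‖²` satisfies `V' = -bκe² ≤ 0`. Hence `e` and `D` stay bounded, `e` is square
integrable and `e'` is bounded, and Barbalat's lemma gives `e → 0`. Finally
`x̃'' + c₁x̃' + c₀x̃ = e`; factoring the Hurwitz polynomial as `(p - r₁)(p - r₂)` over `ℂ` turns
this into two first-order equations `z' = rz + f` with `Re r < 0` and `f → 0`, and Grönwall's
inequality for `‖z‖²` shows that such `z` tend to `0`.
-/

open Filter Set Topology MeasureTheory
open scoped RealInnerProductSpace NNReal

theorem tendsto_zero_of_hasDerivAt_le_neg_mul_add {w w' g : ℝ → ℝ} {α : ℝ} (hα : 0 < α)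
    (hw : ∀ t, HasDerivAt w (w' t) t) (hw' : ∀ t, w' t ≤ -α * w t + g t)
    (hg : Tendsto g atTop (𝓝 0)) (hw0 : ∀ t, 0 ≤ w t) : Tendsto w atTop (𝓝 0) := by
  refine tendsto_order.2 ⟨fun a ha => .of_forall fun t => ha.trans_le (hw0 t), fun ε hε => ?_⟩
  obtain ⟨t₀, ht₀⟩ :=
    eventually_atTop.1 (hg.eventually (gt_mem_nhds (by positivity : 0 < α * ε / 2)))
  have hbound : ∀ t, t₀ ≤ t → w t ≤ w t₀ * Real.exp (-α * (t - t₀)) + ε / 2 := by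
    intro t ht
    have hgronwall := le_gronwallBound_of_liminf_deriv_right_le (K := -α) (ε := α * ε / 2)
      (fun s _ => (hw s).continuousAt.continuousWithinAt)
      (fun s _ r hr => (hw s).hasDerivWithinAt.liminf_right_slope_le hr) le_rfl
      (fun s hs => by linarith [hw' s, ht₀ s hs.1]) t ⟨ht, le_rfl⟩
    rw [gronwallBound_of_K_ne_0 (by linarith)] at hgronwall
    have hexp := Real.exp_pos (-α * (t - t₀))
    have : α * ε / 2 / -α * (Real.exp (-α * (t - t₀)) - 1)
        = ε / 2 * (1 - Real.exp (-α * (t - t₀))) := by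
      field_simp; ring
    nlinarith
  have hdecay : Tendsto (fun t => w t₀ * Real.exp (-α * (t - t₀))) atTop (𝓝 0) := by
    have : Tendsto (fun t => -α * (t - t₀)) atTop atBot :=
      (tendsto_atTop_add_const_right _ _ tendsto_id).const_mul_atTop_of_neg (by linarith)
    simpa using (Real.tendsto_exp_atBot.comp this).const_mul (w t₀)
  filter_upwards [hdecay.eventually (gt_mem_nhds (half_pos hε)), eventually_ge_atTop t₀]
    with t hsmall ht
  linarith [hbound t ht]

theorem Complex.tendsto_zero_of_hasDerivAt_mul_add {z f : ℝ → ℂ} {r : ℂ} (hr : r.re < 0)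
    (hz : ∀ t, HasDerivAt z (r * z t + f t) t) (hf : Tendsto f atTop (𝓝 0)) :
    Tendsto z atTop (𝓝 0) := by
  set μ := -r.re
  have hμ : 0 < μ := neg_pos.2 hr
  have hrz : ∀ t, ⟪z t, r * z t⟫ = -μ * ‖z t‖ ^ 2 := by
    intro t
    rw [Complex.inner, ← Complex.normSq_eq_norm_sq]
    simp only [mul_re, conj_re, mul_im, conj_im, normSq_apply, μ]
    ring
  have hsq : Tendsto (fun t => ‖z t‖ ^ 2) atTop (𝓝 0) := by
    refine tendsto_zero_of_hasDerivAt_le_neg_mul_add hμ (fun t => (hz t).norm_sq) (fun t => ?_)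
      (by simpa using (hf.norm.pow 2).div_const μ) (fun t => sq_nonneg _)
    rw [inner_add_right, hrz]
    have hamgm : 2 * (‖z t‖ * ‖f t‖) ≤ μ * ‖z t‖ ^ 2 + ‖f t‖ ^ 2 / μ := by
      rw [← sub_nonneg]
      have : μ * ‖z t‖ ^ 2 + ‖f t‖ ^ 2 / μ - 2 * (‖z t‖ * ‖f t‖)
          = (μ * ‖z t‖ - ‖f t‖) ^ 2 / μ := by
        field_simp; ring
      rw [this]; positivity
    linarith [real_inner_le_norm (z t) (f t)]
  exact tendsto_zero_iff_norm_tendsto_zero.2 (by simpa using hsq.sqrt)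

theorem exists_quadratic_roots_re_neg {c₀ c₁ : ℝ} (hc₀ : 0 < c₀) (hc₁ : 0 < c₁) :
    ∃ r₁ r₂ : ℂ, r₁.re < 0 ∧ r₂.re < 0 ∧ r₁ + r₂ = -c₁ ∧ r₁ * r₂ = c₀ := by
  obtain ⟨s, hs⟩ := IsAlgClosed.exists_pow_nat_eq ((c₁ : ℂ) ^ 2 - 4 * c₀) two_pos
  have hre : s.re ^ 2 - s.im ^ 2 = c₁ ^ 2 - 4 * c₀ := by
    simpa [sq] using congrArg Complex.re hs
  have him : s.re * s.im = 0 := by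
    have := congrArg Complex.im hs
    simp only [sq, Complex.mul_im, Complex.sub_im, Complex.ofReal_re, Complex.ofReal_im,
      mul_zero, zero_mul, add_zero, Complex.re_ofNat, Complex.im_ofNat, sub_self] at this
    linarith
  have hlt : |s.re| < c₁ := by
    refine abs_lt_of_sq_lt_sq ?_ hc₁.le
    rcases mul_eq_zero.1 him with h | h <;>
      simp only [h, zero_pow two_ne_zero, zero_sub, sub_zero] at hre ⊢ <;> nlinarith
  refine ⟨(-c₁ + s) / 2, (-c₁ - s) / 2, ?_, ?_, by ring, by linear_combination -hs / 4⟩ <;>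
    simp only [Complex.div_ofNat_re, Complex.add_re, Complex.sub_re, Complex.neg_re,
      Complex.ofReal_re] <;> linarith [abs_lt.1 hlt]

theorem tendsto_zero_of_hurwitz_second_order {y : ℝ → ℝ} {c₀ c₁ : ℝ} (hc₀ : 0 < c₀)
    (hc₁ : 0 < c₁) (hy : Differentiable ℝ y) (hy' : Differentiable ℝ (deriv y))
    (hlim : Tendsto (fun t => c₀ * y t + c₁ * deriv y t + deriv (deriv y) t) atTop (𝓝 0)) :
    Tendsto y atTop (𝓝 0) ∧ Tendsto (deriv y) atTop (𝓝 0) := by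
  obtain ⟨r₁, r₂, hr₁, hr₂, hsum, hprod⟩ := exists_quadratic_roots_re_neg hc₀ hc₁
  -- `z' = r₂ z + (y'' + c₁ y' + c₀ y)` and `y' = r₁ y + z`
  set z : ℝ → ℂ := fun t => ((deriv y t : ℝ) : ℂ) - r₁ * (y t : ℝ)
  have hz : Tendsto z atTop (𝓝 0) := by
    refine Complex.tendsto_zero_of_hasDerivAt_mul_add hr₂ (fun t => ?_)
      (by simpa using (Complex.continuous_ofReal.tendsto 0).comp hlim)
    refine ((hy' t).hasDerivAt.ofReal_comp.fun_sub
      ((hy t).hasDerivAt.ofReal_comp.const_mul r₁)).congr_deriv ?_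
    simp only [z, Function.comp_apply]
    push_cast
    linear_combination ((y t : ℝ) : ℂ) * hprod - ((deriv y t : ℝ) : ℂ) * hsum
  have hyC : Tendsto (fun t => ((y t : ℝ) : ℂ)) atTop (𝓝 0) :=
    Complex.tendsto_zero_of_hasDerivAt_mul_add hr₁
      (fun t => by convert (hy t).hasDerivAt.ofReal_comp using 1; ring) hz
  have hy'C : Tendsto (fun t => ((deriv y t : ℝ) : ℂ)) atTop (𝓝 0) := by
    simpa [z] using hz.add (hyC.const_mul r₁)
  exact ⟨by simpa [Function.comp_def] using (Complex.continuous_re.tendsto 0).comp hyC,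
    by simpa [Function.comp_def] using (Complex.continuous_re.tendsto 0).comp hy'C⟩

theorem tendsto_intervalIntegral_add_const_zero {f : ℝ → ℝ} {a : ℝ}
    (hf : IntegrableOn f (Ioi a)) (h : ℝ) :
    Tendsto (fun t => ∫ s in t..t + h, f s) atTop (𝓝 0) := by
  have hF := intervalIntegral_tendsto_integral_Ioi a hf tendsto_id
  have hint : ∀ t, a ≤ t → IntervalIntegrable f volume a t := fun t ht =>
    (intervalIntegrable_iff_integrableOn_Ioc_of_le ht).2 (hf.mono_set Ioc_subset_Ioi_self)
  refine (by simpa using (hF.comp (tendsto_atTop_add_const_right _ h tendsto_id)).sub hF :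
    Tendsto (fun t => (∫ s in a..t + h, f s) - ∫ s in a..t, f s) atTop (𝓝 0)).congr' ?_
  filter_upwards [eventually_ge_atTop a, eventually_ge_atTop (a - h)] with t ht ht'
  exact intervalIntegral.integral_interval_sub_left (hint _ (by linarith)) (hint t ht)

-- Barbalat's lemma
theorem tendsto_zero_of_lipschitzOnWith_of_integrableOn_sq {e : ℝ → ℝ} {K : ℝ≥0}
    (hlip : LipschitzOnWith K e (Ici 0)) (he : IntegrableOn (fun t => e t ^ 2) (Ioi 0)) :
    Tendsto e atTop (𝓝 0) := by
  set L : ℝ := K + 1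
  have hL : 0 < L := by positivity
  rw [tendsto_zero_iff_abs_tendsto_zero]
  refine tendsto_order.2
    ⟨fun a ha => .of_forall fun t => ha.trans_le (abs_nonneg _), fun ε hε => ?_⟩
  -- if `|e t| ≥ ε`, then `|e| ≥ ε / 2` on `[t, t + h]`, so `∫ t..t + h, e² ≥ ε² h / 4`
  set h := ε / (2 * L)
  have hh : 0 < h := by positivity
  filter_upwards [(tendsto_intervalIntegral_add_const_zero he h).eventually
    (gt_mem_nhds (by positivity : 0 < ε ^ 2 / 4 * h)), eventually_ge_atTop 0] with t hsmall ht
  by_contra! hbig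
  rw [Function.comp_apply] at hbig
  have hlow : ∀ s ∈ Icc t (t + h), ε ^ 2 / 4 ≤ e s ^ 2 := by
    intro s hs
    have hst : |e s - e t| ≤ L * (s - t) := by
      have := hlip.dist_le_mul s (ht.trans hs.1) t ht
      rw [Real.dist_eq, Real.dist_eq, abs_of_nonneg (sub_nonneg.2 hs.1)] at this
      nlinarith [NNReal.coe_nonneg K, sub_nonneg.2 hs.1]
    have hLh : L * (s - t) ≤ ε / 2 := by
      calc L * (s - t) ≤ L * h := by gcongr; linarith [hs.2]
        _ = ε / 2 := by simp only [h]; field_simp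
    have : ε / 2 ≤ |e s| := by
      linarith [abs_sub_abs_le_abs_sub (e t) (e s), abs_sub_comm (e s) (e t)]
    nlinarith [sq_abs (e s)]
  have hmass := intervalIntegral.integral_mono_on (by linarith) intervalIntegrable_const
    ((intervalIntegrable_iff_integrableOn_Ioc_of_le (by linarith)).2
      (he.mono_set fun s hs => ht.trans_lt hs.1)) hlow
  simp only [intervalIntegral.integral_const, smul_eq_mul, add_sub_cancel_left] at hmass
  linarith

section ClosedLoop

variable {E : Type*} [NormedAddCommGroup E] [InnerProductSpace ℝ E]
  {b κ φ P : ℝ} {e : ℝ → ℝ} {D p : ℝ → E}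

/-- The error dynamics on `[0, ∞)`; in the main theorem `D = D̂ - D*` is the parameter error
and `p = Ψ ∘ û` the regressor. -/
structure IsClosedLoopError (b κ φ : ℝ) (e : ℝ → ℝ) (D p : ℝ → E) : Prop where
  hasDerivAt_error : ∀ t, 0 ≤ t → HasDerivAt e (b * ⟪D t, p t⟫ - b * κ * e t) t
  hasDerivAt_param : ∀ t, 0 ≤ t → HasDerivAt D (-(φ * e t) • p t) t

noncomputable def lyapunov (b φ : ℝ) (e : ℝ → ℝ) (D : ℝ → E) (t : ℝ) : ℝ :=
  e t ^ 2 / 2 + b / (2 * φ) * ‖D t‖ ^ 2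

namespace IsClosedLoopError

theorem continuousOn_error (h : IsClosedLoopError b κ φ e D p) : ContinuousOn e (Ici 0) :=
  fun t ht => (h.hasDerivAt_error t ht).continuousAt.continuousWithinAt

theorem hasDerivAt_lyapunov (h : IsClosedLoopError b κ φ e D p) (hφ : φ ≠ 0) {t : ℝ}
    (ht : 0 ≤ t) : HasDerivAt (lyapunov b φ e D) (-(b * κ) * e t ^ 2) t := by
  refine ((((h.hasDerivAt_error t ht).pow 2).div_const 2).add
    ((h.hasDerivAt_param t ht).norm_sq.const_mul (b / (2 * φ)))).congr_deriv ?_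
  rw [inner_smul_right]
  field_simp
  ring

theorem lyapunov_le_lyapunov_zero (h : IsClosedLoopError b κ φ e D p) (hbκ : 0 ≤ b * κ)
    (hφ : φ ≠ 0) {t : ℝ} (ht : 0 ≤ t) : lyapunov b φ e D t ≤ lyapunov b φ e D 0 := by
  refine antitoneOn_of_hasDerivWithinAt_nonpos (f' := fun s => -(b * κ) * e s ^ 2)
    (convex_Ici 0) (fun s hs => (h.hasDerivAt_lyapunov hφ hs).continuousAt.continuousWithinAt)
    (fun s hs => ?_) (fun s _ => ?_) self_mem_Ici ht ht
  · rw [interior_Ici] at hs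
    exact (h.hasDerivAt_lyapunov hφ hs.le).hasDerivWithinAt
  · nlinarith [sq_nonneg (e s)]

theorem integrableOn_sq (h : IsClosedLoopError b κ φ e D p) (hb : 0 < b) (hκ : 0 < κ)
    (hφ : 0 < φ) : IntegrableOn (fun t => e t ^ 2) (Ioi 0) := by
  have hsq : ContinuousOn (fun t => e t ^ 2) (Ici 0) := h.continuousOn_error.pow 2
  refine integrableOn_Ioi_of_intervalIntegral_norm_bounded (lyapunov b φ e D 0 / (b * κ)) 0
    (fun i => (hsq.mono Icc_subset_Ici_self).integrableOn_Icc.mono_set Ioc_subset_Icc_self)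
    tendsto_id ?_
  filter_upwards [eventually_ge_atTop 0] with t ht
  have hftc : ∫ s in (0 : ℝ)..t, -(b * κ) * e s ^ 2
      = lyapunov b φ e D t - lyapunov b φ e D 0 :=
    intervalIntegral.integral_eq_sub_of_hasDerivAt
      (fun s hs => h.hasDerivAt_lyapunov hφ.ne' (by rw [uIcc_of_le ht] at hs; exact hs.1))
      ((hsq.const_smul (-(b * κ))).mono Icc_subset_Ici_self |>.intervalIntegrable_of_Icc ht)
  have hV : 0 ≤ lyapunov b φ e D t := by unfold lyapunov; positivity
  rw [intervalIntegral.integral_const_mul] at hftc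
  simp only [id, Real.norm_eq_abs, abs_pow, sq_abs, le_div_iff₀ (mul_pos hb hκ)]
  linarith

theorem exists_bound (h : IsClosedLoopError b κ φ e D p) (hb : 0 < b) (hκ : 0 ≤ κ)
    (hφ : 0 < φ) : ∃ C, 0 ≤ C ∧ ∀ t, 0 ≤ t → |e t| ≤ C ∧ ‖D t‖ ≤ C := by
  set V₀ := lyapunov b φ e D 0
  refine ⟨√(2 * V₀) + √(2 * φ / b * V₀), by positivity, fun t ht => ?_⟩
  have hV : e t ^ 2 / 2 + b / (2 * φ) * ‖D t‖ ^ 2 ≤ V₀ :=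
    h.lyapunov_le_lyapunov_zero (mul_nonneg hb.le hκ) hφ.ne' ht
  have hD : 0 ≤ b / (2 * φ) * ‖D t‖ ^ 2 := by positivity
  constructor
  · exact (Real.abs_le_sqrt (by linarith)).trans (le_add_of_nonneg_right (Real.sqrt_nonneg _))
  · refine le_add_of_nonneg_of_le (Real.sqrt_nonneg _) (Real.le_sqrt_of_sq_le ?_)
    calc ‖D t‖ ^ 2 = 2 * φ / b * (b / (2 * φ) * ‖D t‖ ^ 2) := by field_simp
      _ ≤ 2 * φ / b * V₀ := by gcongr; linarith [sq_nonneg (e t)]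

theorem bounded_and_tendsto_zero (h : IsClosedLoopError b κ φ e D p) (hb : 0 < b)
    (hκ : 0 < κ) (hφ : 0 < φ) (hp : ∀ t, 0 ≤ t → ‖p t‖ ≤ P) :
    (∃ C, ∀ t, 0 ≤ t → |e t| ≤ C ∧ ‖D t‖ ≤ C) ∧ Tendsto e atTop (𝓝 0) := by
  obtain ⟨C, hC, hbound⟩ := h.exists_bound hb hκ.le hφ
  refine ⟨⟨C, hbound⟩, tendsto_zero_of_lipschitzOnWith_of_integrableOn_sq
    (K := (b * (C * P) + b * κ * C).toNNReal) ?_ (h.integrableOn_sq hb hκ hφ)⟩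
  refine (convex_Ici 0).lipschitzOnWith_of_nnnorm_hasDerivWithin_le
    (fun t ht => (h.hasDerivAt_error t ht).hasDerivWithinAt) fun t ht => ?_
  rw [← NNReal.coe_le_coe, coe_nnnorm, Real.coe_toNNReal', Real.norm_eq_abs]
  refine le_max_of_le_left ?_
  obtain ⟨heC, hDC⟩ := hbound t ht
  have hinner : |⟪D t, p t⟫| ≤ C * P :=
    (abs_real_inner_le_norm _ _).trans (mul_le_mul hDC (hp t ht) (norm_nonneg _) hC)
  calc |b * ⟪D t, p t⟫ - b * κ * e t| ≤ |b * ⟪D t, p t⟫| + |b * κ * e t| := abs_sub _ _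
    _ ≤ b * (C * P) + b * κ * C := by
      rw [abs_mul, abs_mul (b * κ), abs_of_pos hb, abs_of_pos (mul_pos hb hκ)]
      gcongr

end IsClosedLoopError

end ClosedLoop

theorem adaptive_fuzzy_global_stability_and_tracking_general
    (a₀ a₁ a₂ b c₀ c₁ κ φ : ℝ)
    (hb : 0 < b) (hc₀ : 0 < c₀) (hc₁ : 0 < c₁) (hκ : 0 < κ) (hφ : 0 < φ)
    (N : ℕ)
    (Dstar : EuclideanSpace ℝ (Fin N))
    (Ψ : ℝ → EuclideanSpace ℝ (Fin N)) (hΨ : ∀ z : ℝ, ‖Ψ z‖ ≤ 1)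
    (x_d x : ℝ → ℝ)
    (hxd : Differentiable ℝ x_d) (hxd' : Differentiable ℝ (deriv x_d))
    (hxd'' : Differentiable ℝ (deriv (deriv x_d)))
    (hx : Differentiable ℝ x) (hx' : Differentiable ℝ (deriv x))
    (hx'' : Differentiable ℝ (deriv (deriv x)))
    (Dhat : ℝ → EuclideanSpace ℝ (Fin N)) (hDhat : Differentiable ℝ Dhat)
    (d : ℝ → ℝ)
    (xtil e uhat u : ℝ → ℝ)
    (hxtil : ∀ t : ℝ, xtil t = x t - x_d t)
    (he : ∀ t : ℝ, e t = c₀ * xtil t + c₁ * deriv xtil t + deriv (deriv xtil) t)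
    (huhat : ∀ t : ℝ, uhat t = b⁻¹ * (a₀ * x t + a₁ * deriv x t + a₂ * deriv (deriv x) t
      + deriv (deriv (deriv x_d)) t - c₁ * deriv (deriv xtil) t - c₀ * deriv xtil t))
    (hu : ∀ t : ℝ, u t = uhat t + ⟪Dhat t, Ψ (uhat t)⟫ - κ * e t)
    (hsys : ∀ t : ℝ, 0 ≤ t → deriv (deriv (deriv x)) t =
      -a₀ * x t - a₁ * deriv x t - a₂ * deriv (deriv x) t + b * u t - b * d t)
    (hadapt : ∀ t : ℝ, 0 ≤ t → deriv Dhat t = -(φ * e t) • Ψ (uhat t))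
    (hopt : ∀ t : ℝ, 0 ≤ t → ⟪Dstar, Ψ (uhat t)⟫ = d t) :
    (∃ C : ℝ, ∀ t : ℝ, 0 ≤ t → |e t| ≤ C ∧ ‖Dhat t - Dstar‖ ≤ C) ∧
      Tendsto e atTop (nhds 0) ∧
      Tendsto xtil atTop (nhds 0) ∧ Tendsto (deriv xtil) atTop (nhds 0) := by
  have hxtil' : xtil = x - x_d := funext hxtil
  have hd1 : deriv xtil = deriv x - deriv x_d := by
    rw [hxtil']; exact funext fun t => deriv_sub (hx t) (hxd t)
  have hd2 : deriv (deriv xtil) = deriv (deriv x) - deriv (deriv x_d) := by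
    rw [hd1]; exact funext fun t => deriv_sub (hx' t) (hxd' t)
  have hy : Differentiable ℝ xtil := by rw [hxtil']; exact hx.sub hxd
  have hy' : Differentiable ℝ (deriv xtil) := by rw [hd1]; exact hx'.sub hxd'
  have hE : ∀ t, HasDerivAt e (c₀ * deriv xtil t + c₁ * deriv (deriv xtil) t
      + (deriv (deriv (deriv x)) t - deriv (deriv (deriv x_d)) t)) t := fun t => by
    rw [show e = _ from funext he]
    exact (((hy t).hasDerivAt.const_mul c₀).add ((hy' t).hasDerivAt.const_mul c₁)).add
      (hd2 ▸ (hx'' t).hasDerivAt.sub (hxd'' t).hasDerivAt)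
  have hclosed : IsClosedLoopError b κ φ e (fun t => Dhat t - Dstar) (fun t => Ψ (uhat t)) := by
    refine ⟨fun t ht => (hE t).congr_deriv ?_,
      fun t ht => hadapt t ht ▸ (hDhat t).hasDerivAt.sub_const Dstar⟩
    have hbu : b * uhat t = a₀ * x t + a₁ * deriv x t + a₂ * deriv (deriv x) t
        + deriv (deriv (deriv x_d)) t - c₁ * deriv (deriv xtil) t - c₀ * deriv xtil t := by
      rw [huhat t]; field_simp
    rw [hsys t ht, hu t, inner_sub_left, hopt t ht]
    linear_combination hbu
  obtain ⟨hbdd, he0⟩ :=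
    hclosed.bounded_and_tendsto_zero hb hκ hφ (P := 1) fun t _ => hΨ (uhat t)
  exact ⟨hbdd, he0, tendsto_zero_of_hurwitz_second_order hc₀ hc₁ hy hy' (he0.congr he)⟩

/-- Main theorem: global stability and trajectory tracking of the adaptive fuzzy
controller for the electrohydraulic servosystem with dead-zone. Under the control law
`u = û + ⟨D̂, Ψ(û)⟩ - κ e`, the adaptation law `D̂' = -φ e Ψ(û)`, and an optimal parameter
vector `D*` with `⟨D*, Ψ(û)⟩ = d`, the signals `e` and `D̂ - D*` stay bounded, `e → 0`,
and the tracking error `x̃ = x - x_d` satisfies `x̃ → 0` and `x̃' → 0`. -/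
theorem adaptive_fuzzy_global_stability_and_tracking
    (a₀ a₁ a₂ b c₀ c₁ κ φ : ℝ)
    (hb : 0 < b) (hc₀ : 0 < c₀) (hc₁ : 0 < c₁) (hκ : 0 < κ) (hφ : 0 < φ)
    (N : ℕ) (hN : 0 < N)
    (Dstar : EuclideanSpace ℝ (Fin N))
    (Ψ : ℝ → EuclideanSpace ℝ (Fin N)) (hΨ : ∀ z : ℝ, ‖Ψ z‖ ≤ 1)
    (x_d x : ℝ → ℝ)
    (hxd : Differentiable ℝ x_d) (hxd' : Differentiable ℝ (deriv x_d))
    (hxd'' : Differentiable ℝ (deriv (deriv x_d)))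
    (hxdbdd : ∃ M : ℝ, ∀ t : ℝ, 0 ≤ t →
      |x_d t| ≤ M ∧ |deriv x_d t| ≤ M ∧ |deriv (deriv x_d) t| ≤ M ∧
        |deriv (deriv (deriv x_d)) t| ≤ M)
    (hx : Differentiable ℝ x) (hx' : Differentiable ℝ (deriv x))
    (hx'' : Differentiable ℝ (deriv (deriv x)))
    (Dhat : ℝ → EuclideanSpace ℝ (Fin N)) (hDhat : Differentiable ℝ Dhat)
    (d : ℝ → ℝ)
    (xtil e uhat u : ℝ → ℝ)
    (hxtil : ∀ t : ℝ, xtil t = x t - x_d t)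
    (he : ∀ t : ℝ, e t = c₀ * xtil t + c₁ * deriv xtil t + deriv (deriv xtil) t)
    (huhat : ∀ t : ℝ, uhat t = b⁻¹ * (a₀ * x t + a₁ * deriv x t + a₂ * deriv (deriv x) t
      + deriv (deriv (deriv x_d)) t - c₁ * deriv (deriv xtil) t - c₀ * deriv xtil t))
    (hu : ∀ t : ℝ, u t = uhat t + ⟪Dhat t, Ψ (uhat t)⟫ - κ * e t)
    (hsys : ∀ t : ℝ, 0 ≤ t → deriv (deriv (deriv x)) t =
      -a₀ * x t - a₁ * deriv x t - a₂ * deriv (deriv x) t + b * u t - b * d t)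
    (hadapt : ∀ t : ℝ, 0 ≤ t → deriv Dhat t = -(φ * e t) • Ψ (uhat t))
    (hopt : ∀ t : ℝ, 0 ≤ t → ⟪Dstar, Ψ (uhat t)⟫ = d t) :
    (∃ C : ℝ, ∀ t : ℝ, 0 ≤ t → |e t| ≤ C ∧ ‖Dhat t - Dstar‖ ≤ C) ∧
      Tendsto e atTop (nhds 0) ∧
      Tendsto xtil atTop (nhds 0) ∧ Tendsto (deriv xtil) atTop (nhds 0) :=
  adaptive_fuzzy_global_stability_and_tracking_general a₀ a₁ a₂ b c₀ c₁ κ φ hb hc₀ hc₁ hκ hφ N Dstar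
    Ψ hΨ x_d x hxd hxd' hxd'' hx hx' hx'' Dhat hDhat d xtil e uhat u hxtil he huhat hu hsys hadapt
    hopt
end
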